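/- Let b : ℝⁿ → ℝⁿ be globally Lipschitz. Then the functional Ŝ(φ̄) = ‖φ̄'‖_{L²(0,1)} ‖b(φ̄)‖_{L²(0,1)} − ∫₀¹ ⟨φ̄'(s), b(φ̄(s))⟩ ds is sequentially weakly lower semicontinuous on H¹([0,1]; ℝⁿ): for every sequence {φ̄_k} converging weakly to φ̄ in H¹([0,1]; ℝⁿ), one has Ŝ(φ̄) ≤ liminf_{k→∞} Ŝ(φ̄_k). -/

import Mathlib

/-! In `L²(0,1)`, `Ŝ(φ) = ‖φ'‖ ‖b ∘ φ‖ - ⟪φ', b ∘ φ⟫`. Weak `H¹` convergence gives `φₖ' ⇀ φ'`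
weakly in `L²`; it also gives `φₖ → φ` pointwise with a uniform bound, because a point value
`φ(t)` is controlled by the mean of `φ` and by `∫ ‖φ'‖`. Dominated convergence then gives
`b ∘ φₖ → b ∘ φ` strongly in `L²`. What remains is a Hilbert space fact: if `xₖ ⇀ x` and
`yₖ → y`, then `‖x‖ ‖y‖ - ⟪x, y⟫ ≤ liminf (‖xₖ‖ ‖yₖ‖ - ⟪xₖ, yₖ⟫)`. -/

open MeasureTheory Filter intervalIntegral
open scoped RealInnerProductSpace Topology

noncomputable section

/-- `φ` is an `H¹` path on `[0,T]` with (weak) derivative `dφ`: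
`dφ` is square integrable on `(0,T)` and `φ` is the primitive of `dφ`. -/
def IsH1Path {n : ℕ} (T : ℝ) (φ dφ : ℝ → EuclideanSpace ℝ (Fin n)) : Prop :=
  MeasureTheory.MemLp dφ 2 (MeasureTheory.volume.restrict (Set.Ioc (0:ℝ) T)) ∧
  ∀ t ∈ Set.Icc (0:ℝ) T, φ t = φ 0 + ∫ s in (0:ℝ)..t, dφ s

/-- The Freidlin–Wentzell action functional `S_T(φ) = (1/2)∫₀ᵀ ‖φ' - b(φ)‖² dt`. -/
def action {n : ℕ} (b : EuclideanSpace ℝ (Fin n) → EuclideanSpace ℝ (Fin n))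
    (T : ℝ) (φ dφ : ℝ → EuclideanSpace ℝ (Fin n)) : ℝ :=
  (1/2) * ∫ t in (0:ℝ)..T, ‖dφ t - b (φ t)‖^2

/-- The `L²(0,T)` norm of an `ℝⁿ`-valued function. -/
def L2norm {n : ℕ} (T : ℝ) (f : ℝ → EuclideanSpace ℝ (Fin n)) : ℝ :=
  Real.sqrt (∫ t in (0:ℝ)..T, ‖f t‖^2)

/-- The admissible set `A_T` of `H¹` transition paths from `x₁` to `x₂` on `[0,T]`. -/
def Adm {n : ℕ} (T : ℝ) (x₁ x₂ : EuclideanSpace ℝ (Fin n))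
    (φ dφ : ℝ → EuclideanSpace ℝ (Fin n)) : Prop :=
  IsH1Path T φ dφ ∧ φ 0 = x₁ ∧ φ T = x₂

/-- The rescaled action `S(T, φ̄) = (T/2)∫₀¹ ‖T⁻¹ φ̄' - b(φ̄)‖² ds` on `[0,1]`. -/
def Ssc {n : ℕ} (b : EuclideanSpace ℝ (Fin n) → EuclideanSpace ℝ (Fin n))
    (T : ℝ) (φ dφ : ℝ → EuclideanSpace ℝ (Fin n)) : ℝ :=
  (T/2) * ∫ s in (0:ℝ)..1, ‖T⁻¹ • dφ s - b (φ s)‖^2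

/-- The optimal linear time scaling `T̂(φ̄) = ‖φ̄'‖_{L²} / ‖b(φ̄)‖_{L²}`. -/
def That {n : ℕ} (b : EuclideanSpace ℝ (Fin n) → EuclideanSpace ℝ (Fin n))
    (φ dφ : ℝ → EuclideanSpace ℝ (Fin n)) : ℝ :=
  L2norm 1 dφ / L2norm 1 (fun s => b (φ s))

/-- The reformulated action `Ŝ(φ̄) = ‖φ̄'‖_{L²} ‖b(φ̄)‖_{L²} − ∫₀¹⟨φ̄', b(φ̄)⟩ ds`. -/
def Shat {n : ℕ} (b : EuclideanSpace ℝ (Fin n) → EuclideanSpace ℝ (Fin n))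
    (φ dφ : ℝ → EuclideanSpace ℝ (Fin n)) : ℝ :=
  L2norm 1 dφ * L2norm 1 (fun s => b (φ s)) - ∫ s in (0:ℝ)..1, ⟪dφ s, b (φ s)⟫

/-- `a` and `c` are adjacent nodes of the partition (finite node set) `P`. -/
def Adjacent (P : Finset ℝ) (a c : ℝ) : Prop :=
  a ∈ P ∧ c ∈ P ∧ a < c ∧ ∀ p ∈ P, p ≤ a ∨ c ≤ p

/-- `φ` is affine on each element of the partition `P`. -/
def PiecewiseAffineOn {n : ℕ} (P : Finset ℝ) (φ : ℝ → EuclideanSpace ℝ (Fin n)) : Prop :=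
  ∀ a c, Adjacent P a c → ∀ t ∈ Set.Icc a c,
    φ t = φ a + ((t - a) / (c - a)) • (φ c - φ a)

/-- `P` is a partition (node set) of `[0,T]`. -/
def IsPartition (T : ℝ) (P : Finset ℝ) : Prop :=
  (0:ℝ) ∈ P ∧ T ∈ P ∧ ∀ p ∈ P, p ∈ Set.Icc (0:ℝ) T

/-- Weak convergence `φ_k ⇀ φ` in `H¹((0,T); ℝⁿ)`, expressed by testing the pair
`(φ_k, φ_k')` against arbitrary pairs of `L²` functions. -/
def WeakH1Tendsto {n : ℕ} (T : ℝ) (φk dφk : ℕ → ℝ → EuclideanSpace ℝ (Fin n))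
    (φ dφ : ℝ → EuclideanSpace ℝ (Fin n)) : Prop :=
  ∀ g₀ g₁ : ℝ → EuclideanSpace ℝ (Fin n),
    MeasureTheory.MemLp g₀ 2 (MeasureTheory.volume.restrict (Set.Ioc (0:ℝ) T)) →
    MeasureTheory.MemLp g₁ 2 (MeasureTheory.volume.restrict (Set.Ioc (0:ℝ) T)) →
    Tendsto (fun k => (∫ t in (0:ℝ)..T, ⟪φk k t, g₀ t⟫) + ∫ t in (0:ℝ)..T, ⟪dφk k t, g₁ t⟫)
      atTop (𝓝 ((∫ t in (0:ℝ)..T, ⟪φ t, g₀ t⟫) + ∫ t in (0:ℝ)..T, ⟪dφ t, g₁ t⟫))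

/-- Values of `S_T` over the admissible set `A_T` (Problem I). -/
def probISet {n : ℕ} (b : EuclideanSpace ℝ (Fin n) → EuclideanSpace ℝ (Fin n))
    (T : ℝ) (x₁ x₂ : EuclideanSpace ℝ (Fin n)) : Set ℝ :=
  {v | ∃ φ dφ, Adm T x₁ x₂ φ dφ ∧ v = action b T φ dφ}

/-- Values of `S_T` over all `T > 0` and `φ ∈ A_T` (Problem II); its infimum is the
quasi-potential `V(x₁,x₂)`. -/
def probIISet {n : ℕ} (b : EuclideanSpace ℝ (Fin n) → EuclideanSpace ℝ (Fin n))
    (x₁ x₂ : EuclideanSpace ℝ (Fin n)) : Set ℝ :=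
  {v | ∃ T, 0 < T ∧ ∃ φ dφ, Adm T x₁ x₂ φ dφ ∧ v = action b T φ dφ}

/-- Values of `Ŝ` over the rescaled admissible set `A₁`. -/
def shatSet {n : ℕ} (b : EuclideanSpace ℝ (Fin n) → EuclideanSpace ℝ (Fin n))
    (x₁ x₂ : EuclideanSpace ℝ (Fin n)) : Set ℝ :=
  {v | ∃ φ dφ, Adm 1 x₁ x₂ φ dφ ∧ v = Shat b φ dφ}

/-- Membership in the finite element space `B_h` of continuous piecewise affine
admissible paths associated with the partition `P`. -/
def BmemP {n : ℕ} (P : Finset ℝ) (T : ℝ) (x₁ x₂ : EuclideanSpace ℝ (Fin n))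
    (φ dφ : ℝ → EuclideanSpace ℝ (Fin n)) : Prop :=
  Adm T x₁ x₂ φ dφ ∧ PiecewiseAffineOn P φ

/-- Values of `S_T` over the finite element space `B_h` (the discretized Problem I). -/
def discSet {n : ℕ} (b : EuclideanSpace ℝ (Fin n) → EuclideanSpace ℝ (Fin n))
    (P : Finset ℝ) (T : ℝ) (x₁ x₂ : EuclideanSpace ℝ (Fin n)) : Set ℝ :=
  {v | ∃ φ dφ, BmemP P T x₁ x₂ φ dφ ∧ v = action b T φ dφ}

/-- Values of `Ŝ` over the finite element space `B̄_h` (the discretized Problem II). -/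
def discShatSet {n : ℕ} (b : EuclideanSpace ℝ (Fin n) → EuclideanSpace ℝ (Fin n))
    (P : Finset ℝ) (x₁ x₂ : EuclideanSpace ℝ (Fin n)) : Set ℝ :=
  {v | ∃ φ dφ, BmemP P 1 x₁ x₂ φ dφ ∧ v = Shat b φ dφ}

section WeakConvergence

variable {E : Type*} [NormedAddCommGroup E] [InnerProductSpace ℝ E]

theorem exists_norm_le_of_tendsto_inner [CompleteSpace E] {x : ℕ → E} {x₀ : E}
    (hx : ∀ y, Tendsto (fun k => ⟪x k, y⟫) atTop (𝓝 ⟪x₀, y⟫)) : ∃ C, ∀ k, ‖x k‖ ≤ C := by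
  obtain ⟨C, hC⟩ := banach_steinhaus (g := fun k => innerSL ℝ (x k)) fun y => by
    obtain ⟨C, hC⟩ := (hx y).norm.bddAbove_range
    exact ⟨C, fun k => hC ⟨k, rfl⟩⟩
  exact ⟨C, fun k => by simpa only [innerSL_apply_norm] using hC k⟩

theorem tendsto_inner_of_tendsto_inner_of_tendsto [CompleteSpace E] {x y : ℕ → E} {x₀ y₀ : E}
    (hx : ∀ z, Tendsto (fun k => ⟪x k, z⟫) atTop (𝓝 ⟪x₀, z⟫)) (hy : Tendsto y atTop (𝓝 y₀)) :
    Tendsto (fun k => ⟪x k, y k⟫) atTop (𝓝 ⟪x₀, y₀⟫) := by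
  obtain ⟨C, hC⟩ := exists_norm_le_of_tendsto_inner hx
  have hsmall : Tendsto (fun k => ⟪x k, y k - y₀⟫) atTop (𝓝 0) := by
    have hC0 : Tendsto (fun k => C * ‖y k - y₀‖) atTop (𝓝 0) := by
      simpa using (tendsto_iff_norm_sub_tendsto_zero.1 hy).const_mul C
    refine squeeze_zero_norm (fun k => ?_) hC0
    calc ‖⟪x k, y k - y₀⟫‖ ≤ ‖x k‖ * ‖y k - y₀‖ := norm_inner_le_norm _ _
      _ ≤ C * ‖y k - y₀‖ := by gcongr; exact hC k
  simpa [inner_sub_right] using hsmall.add (hx y₀)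

/-- Testing against `‖y‖ • z - y` with `z` the unit vector along `x₀` writes the functional
as a limit of quantities bounded by `‖x k‖ * ‖y k‖ - ⟪x k, y k⟫`. -/
theorem norm_mul_norm_sub_inner_le_liminf [CompleteSpace E] {x y : ℕ → E} {x₀ y₀ : E}
    (hx : ∀ z, Tendsto (fun k => ⟪x k, z⟫) atTop (𝓝 ⟪x₀, z⟫)) (hy : Tendsto y atTop (𝓝 y₀)) :
    ‖x₀‖ * ‖y₀‖ - ⟪x₀, y₀⟫ ≤ liminf (fun k => ‖x k‖ * ‖y k‖ - ⟪x k, y k⟫) atTop := by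
  set z := ‖x₀‖⁻¹ • x₀
  have hz : ‖z‖ ≤ 1 := by
    rw [norm_smul, norm_inv, norm_norm]
    exact inv_mul_le_one
  have hlim := tendsto_inner_of_tendsto_inner_of_tendsto hx ((hy.norm.smul_const z).sub hy)
  have hx₀z : ⟪x₀, ‖y₀‖ • z - y₀⟫ = ‖x₀‖ * ‖y₀‖ - ⟪x₀, y₀⟫ := by
    rw [inner_sub_right, inner_smul_right, inner_smul_right, real_inner_self_eq_norm_sq]
    rcases eq_or_ne ‖x₀‖ 0 with h | h
    · simp [h]
    · field_simp
  have hle : ∀ k, ⟪x k, ‖y k‖ • z - y k⟫ ≤ ‖x k‖ * ‖y k‖ - ⟪x k, y k⟫ := fun k => by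
    rw [inner_sub_right, inner_smul_right]
    have := real_inner_le_norm (x k) z
    have : ‖x k‖ * ‖z‖ ≤ ‖x k‖ := mul_le_of_le_one_right (norm_nonneg _) hz
    nlinarith [norm_nonneg (y k)]
  obtain ⟨C, hC⟩ := exists_norm_le_of_tendsto_inner hx
  obtain ⟨D, hD⟩ := hy.norm.bddAbove_range
  have hbdd : ∀ k, ‖x k‖ * ‖y k‖ - ⟪x k, y k⟫ ≤ 2 * (C * D) := fun k => by
    have h1 := neg_le_of_abs_le (abs_real_inner_le_norm (x k) (y k))
    have h2 : ‖x k‖ * ‖y k‖ ≤ C * D :=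
      mul_le_mul (hC k) (hD ⟨k, rfl⟩) (norm_nonneg _) ((norm_nonneg _).trans (hC k))
    linarith
  rw [← hx₀z, ← hlim.liminf_eq]
  exact liminf_le_liminf (.of_forall hle) hlim.isBoundedUnder_ge
    (isCoboundedUnder_ge_of_le atTop hbdd)

theorem tendsto_of_tendsto_inner [FiniteDimensional ℝ E] {ι : Type*} {l : Filter ι}
    {x : ι → E} {x₀ : E} (hx : ∀ y, Tendsto (fun k => ⟪x k, y⟫) l (𝓝 ⟪x₀, y⟫)) :
    Tendsto x l (𝓝 x₀) := by
  set e := stdOrthonormalBasis ℝ E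
  have hrepr : ∀ v, ∑ i, ⟪e i, v⟫ • e i = v := e.sum_repr'
  rw [← hrepr x₀, funext fun k => (hrepr (x k)).symm]
  refine tendsto_finsetSum _ fun i _ => ?_
  simp only [real_inner_comm _ (e i)]
  exact (hx (e i)).smul_const _

end WeakConvergence

namespace MeasureTheory.MemLp

variable {α F : Type*} [MeasurableSpace α] {μ : Measure α} [NormedAddCommGroup F] {f g : α → F}

theorem inner_toLp_toLp [InnerProductSpace ℝ F] (hf : MemLp f 2 μ) (hg : MemLp g 2 μ) :
    ⟪hf.toLp f, hg.toLp g⟫ = ∫ a, ⟪f a, g a⟫ ∂μ := by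
  rw [L2.inner_def]
  refine integral_congr_ae ?_
  filter_upwards [hf.coeFn_toLp, hg.coeFn_toLp] with a hfa hga
  rw [hfa, hga]

theorem norm_toLp_eq_sqrt [InnerProductSpace ℝ F] (hf : MemLp f 2 μ) :
    ‖hf.toLp f‖ = √(∫ a, ‖f a‖ ^ 2 ∂μ) := by
  rw [← Real.sqrt_sq (norm_nonneg _), ← real_inner_self_eq_norm_sq, hf.inner_toLp_toLp hf]
  simp only [real_inner_self_eq_norm_sq]

theorem integral_norm_le_norm_toLp [IsProbabilityMeasure μ] (hf : MemLp f 2 μ) :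
    ∫ a, ‖f a‖ ∂μ ≤ ‖hf.toLp f‖ := by
  rw [Lp.norm_toLp, integral_norm_eq_lintegral_enorm hf.1, ← eLpNorm_one_eq_lintegral_enorm]
  exact ENNReal.toReal_mono hf.eLpNorm_ne_top
    (eLpNorm_le_eLpNorm_of_exponent_le one_le_two hf.1)

end MeasureTheory.MemLp

local notation "μ₀₁" => volume.restrict (Set.Ioc (0:ℝ) 1)

instance : IsProbabilityMeasure μ₀₁ :=
  ⟨by simp⟩

theorem integral_zero_one_eq {E : Type*} [NormedAddCommGroup E] [NormedSpace ℝ E] (f : ℝ → E) :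
    ∫ s in (0:ℝ)..1, f s = ∫ s, f s ∂μ₀₁ :=
  intervalIntegral.integral_of_le zero_le_one

namespace IsH1Path

variable {n : ℕ} {T : ℝ} {φ dφ : ℝ → EuclideanSpace ℝ (Fin n)}

theorem continuousOn (h : IsH1Path T φ dφ) : ContinuousOn φ (Set.Icc 0 T) := by
  rcases lt_or_ge T 0 with hT | hT
  · simp [Set.Icc_eq_empty_of_lt hT]
  have hint : IntervalIntegrable dφ volume 0 T :=
    (intervalIntegrable_iff_integrableOn_Ioc_of_le hT).2 (h.1.integrable one_le_two)
  have hprim := intervalIntegral.continuousOn_primitive_interval' hint Set.left_mem_uIcc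
  rw [Set.uIcc_of_le hT] at hprim
  exact (continuousOn_const.add hprim).congr h.2

theorem integrable (h : IsH1Path T φ dφ) : Integrable φ (volume.restrict (Set.Ioc 0 T)) :=
  (h.continuousOn.integrableOn_compact isCompact_Icc).mono_set Set.Ioc_subset_Icc_self

theorem memLp_comp {F : Type*} [NormedAddCommGroup F] {g : EuclideanSpace ℝ (Fin n) → F}
    (h : IsH1Path T φ dφ) (hg : Continuous g) :
    MemLp (fun s => g (φ s)) 2 (volume.restrict (Set.Ioc 0 T)) := by
  have hc : ContinuousOn (fun s => g (φ s)) (Set.Icc 0 T) := hg.comp_continuousOn h.continuousOn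
  obtain ⟨C, hC⟩ := isCompact_Icc.exists_bound_of_continuousOn hc
  refine MemLp.of_bound ((hc.mono Set.Ioc_subset_Icc_self).aestronglyMeasurable measurableSet_Ioc)
    C ?_
  filter_upwards [ae_restrict_mem measurableSet_Ioc] with s hs
  exact hC s (Set.Ioc_subset_Icc_self hs)

theorem norm_sub_le_integral_norm (h : IsH1Path T φ dφ) {t : ℝ} (ht : t ∈ Set.Icc 0 T) :
    ‖φ t - φ 0‖ ≤ ∫ s in Set.Ioc 0 T, ‖dφ s‖ := by
  rw [h.2 t ht, add_sub_cancel_left, intervalIntegral.integral_of_le ht.1]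
  exact (MeasureTheory.norm_integral_le_integral_norm _).trans <|
    setIntegral_mono_set (h.1.integrable one_le_two).norm (.of_forall fun _ => norm_nonneg _)
      (Set.Ioc_subset_Ioc_right ht.2).eventuallyLE

theorem norm_sub_le_norm_toLp (h : IsH1Path 1 φ dφ) {t : ℝ} (ht : t ∈ Set.Icc 0 1) :
    ‖φ t - φ 0‖ ≤ ‖h.1.toLp dφ‖ :=
  (h.norm_sub_le_integral_norm ht).trans h.1.integral_norm_le_norm_toLp

theorem inner_sub_eq_integral_inner_indicator (h : IsH1Path 1 φ dφ) {t : ℝ}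
    (ht : t ∈ Set.Icc 0 1) (e : EuclideanSpace ℝ (Fin n)) :
    ⟪φ t - φ 0, e⟫ = ∫ s, ⟪dφ s, (Set.Ioc 0 t).indicator (fun _ => e) s⟫ ∂μ₀₁ := by
  have hind : (fun s => ⟪dφ s, (Set.Ioc 0 t).indicator (fun _ => e) s⟫)
      = (Set.Ioc 0 t).indicator (fun s => ⟪dφ s, e⟫) := by
    ext s
    by_cases hs : s ∈ Set.Ioc 0 t <;> simp [hs]
  have hint : Integrable dφ (volume.restrict (Set.Ioc 0 t)) :=
    IntegrableOn.mono_set (h.1.integrable one_le_two) (Set.Ioc_subset_Ioc_right ht.2)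
  rw [hind, MeasureTheory.integral_indicator measurableSet_Ioc,
    Measure.restrict_restrict measurableSet_Ioc,
    Set.inter_eq_self_of_subset_left (Set.Ioc_subset_Ioc_right ht.2), h.2 t ht,
    add_sub_cancel_left, intervalIntegral.integral_of_le ht.1, real_inner_comm,
    ← integral_inner hint]
  simp only [real_inner_comm e]

theorem shat_eq_norm_mul_norm_sub_inner
    {b : EuclideanSpace ℝ (Fin n) → EuclideanSpace ℝ (Fin n)} (h : IsH1Path 1 φ dφ)
    (hb : Continuous b) :
    Shat b φ dφ = ‖h.1.toLp dφ‖ * ‖(h.memLp_comp hb).toLp _‖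
      - ⟪h.1.toLp dφ, (h.memLp_comp hb).toLp _⟫ := by
  rw [Shat, L2norm, L2norm, MemLp.norm_toLp_eq_sqrt, MemLp.norm_toLp_eq_sqrt,
    MemLp.inner_toLp_toLp, integral_zero_one_eq, integral_zero_one_eq, integral_zero_one_eq]

end IsH1Path

namespace WeakH1Tendsto

variable {n : ℕ} {φk dφk : ℕ → ℝ → EuclideanSpace ℝ (Fin n)} {φ dφ : ℝ → EuclideanSpace ℝ (Fin n)}

theorem tendsto_integral_inner_left (hweak : WeakH1Tendsto 1 φk dφk φ dφ)
    {g : ℝ → EuclideanSpace ℝ (Fin n)} (hg : MemLp g 2 μ₀₁) :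
    Tendsto (fun k => ∫ s, ⟪φk k s, g s⟫ ∂μ₀₁) atTop (𝓝 (∫ s, ⟪φ s, g s⟫ ∂μ₀₁)) := by
  simpa [integral_zero_one_eq] using hweak g 0 hg MemLp.zero'

theorem tendsto_integral_inner_right (hweak : WeakH1Tendsto 1 φk dφk φ dφ)
    {g : ℝ → EuclideanSpace ℝ (Fin n)} (hg : MemLp g 2 μ₀₁) :
    Tendsto (fun k => ∫ s, ⟪dφk k s, g s⟫ ∂μ₀₁) atTop (𝓝 (∫ s, ⟪dφ s, g s⟫ ∂μ₀₁)) := by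
  simpa [integral_zero_one_eq] using hweak 0 g MemLp.zero' hg

theorem tendsto_inner_toLp (hweak : WeakH1Tendsto 1 φk dφk φ dφ)
    (hk : ∀ k, IsH1Path 1 (φk k) (dφk k)) (hφ : IsH1Path 1 φ dφ)
    (G : Lp (EuclideanSpace ℝ (Fin n)) 2 μ₀₁) :
    Tendsto (fun k => ⟪(hk k).1.toLp (dφk k), G⟫) atTop (𝓝 ⟪hφ.1.toLp dφ, G⟫) := by
  rw [← Lp.toLp_coeFn G (Lp.memLp G)]
  simp only [MemLp.inner_toLp_toLp]
  exact hweak.tendsto_integral_inner_right (Lp.memLp G)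

theorem tendsto_integral (hweak : WeakH1Tendsto 1 φk dφk φ dφ)
    (hk : ∀ k, IsH1Path 1 (φk k) (dφk k)) (hφ : IsH1Path 1 φ dφ) :
    Tendsto (fun k => ∫ s, φk k s ∂μ₀₁) atTop (𝓝 (∫ s, φ s ∂μ₀₁)) := by
  refine tendsto_of_tendsto_inner fun e => ?_
  have hinner : ∀ {ψ dψ : ℝ → EuclideanSpace ℝ (Fin n)}, IsH1Path 1 ψ dψ →
      ⟪∫ s, ψ s ∂μ₀₁, e⟫ = ∫ s, ⟪ψ s, e⟫ ∂μ₀₁ := fun h => by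
    rw [real_inner_comm, ← integral_inner h.integrable]
    simp only [real_inner_comm e]
  simp only [hinner (hk _), hinner hφ]
  exact hweak.tendsto_integral_inner_left (memLp_const e)

theorem tendsto_sub_apply_zero (hweak : WeakH1Tendsto 1 φk dφk φ dφ)
    (hk : ∀ k, IsH1Path 1 (φk k) (dφk k)) (hφ : IsH1Path 1 φ dφ) {t : ℝ}
    (ht : t ∈ Set.Icc 0 1) :
    Tendsto (fun k => φk k t - φk k 0) atTop (𝓝 (φ t - φ 0)) := by
  refine tendsto_of_tendsto_inner fun e => ?_
  simp only [(hk _).inner_sub_eq_integral_inner_indicator ht,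
    hφ.inner_sub_eq_integral_inner_indicator ht]
  exact hweak.tendsto_integral_inner_right
    (memLp_indicator_const 2 measurableSet_Ioc e (Or.inr (measure_ne_top _ _)))

/-- Averaging `φk k 0 = φk k s - (φk k s - φk k 0)` over `s` writes `φk k 0` as a mean, which
converges weakly, minus a mean that converges by dominated convergence. -/
theorem tendsto_apply_zero (hweak : WeakH1Tendsto 1 φk dφk φ dφ)
    (hk : ∀ k, IsH1Path 1 (φk k) (dφk k)) (hφ : IsH1Path 1 φ dφ) :
    Tendsto (fun k => φk k 0) atTop (𝓝 (φ 0)) := by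
  obtain ⟨C, hC⟩ := exists_norm_le_of_tendsto_inner (hweak.tendsto_inner_toLp hk hφ)
  have hdiff : Tendsto (fun k => ∫ s, (φk k s - φk k 0) ∂μ₀₁) atTop
      (𝓝 (∫ s, (φ s - φ 0) ∂μ₀₁)) := by
    refine tendsto_integral_of_dominated_convergence (fun _ => C)
      (fun k => ((hk k).integrable.sub (integrable_const _)).1) (integrable_const C)
      (fun k => ?_) ?_
    all_goals filter_upwards [ae_restrict_mem measurableSet_Ioc] with s hs
    · exact ((hk k).norm_sub_le_norm_toLp (Set.Ioc_subset_Icc_self hs)).trans (hC k)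
    · exact hweak.tendsto_sub_apply_zero hk hφ (Set.Ioc_subset_Icc_self hs)
  have hmean : ∀ {ψ dψ : ℝ → EuclideanSpace ℝ (Fin n)}, IsH1Path 1 ψ dψ →
      ∫ s, ψ s ∂μ₀₁ - ∫ s, (ψ s - ψ 0) ∂μ₀₁ = ψ 0 := fun h => by
    rw [integral_sub h.integrable (integrable_const _)]
    simp
  simpa only [hmean (hk _), hmean hφ] using (hweak.tendsto_integral hk hφ).sub hdiff

theorem tendsto_apply (hweak : WeakH1Tendsto 1 φk dφk φ dφ)
    (hk : ∀ k, IsH1Path 1 (φk k) (dφk k)) (hφ : IsH1Path 1 φ dφ) {t : ℝ}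
    (ht : t ∈ Set.Icc 0 1) :
    Tendsto (fun k => φk k t) atTop (𝓝 (φ t)) := by
  simpa only [sub_add_cancel] using
    (hweak.tendsto_sub_apply_zero hk hφ ht).add (hweak.tendsto_apply_zero hk hφ)

theorem exists_norm_apply_le (hweak : WeakH1Tendsto 1 φk dφk φ dφ)
    (hk : ∀ k, IsH1Path 1 (φk k) (dφk k)) (hφ : IsH1Path 1 φ dφ) :
    ∃ M, ∀ k, ∀ t ∈ Set.Icc (0:ℝ) 1, ‖φk k t‖ ≤ M := by
  obtain ⟨C, hC⟩ := exists_norm_le_of_tendsto_inner (hweak.tendsto_inner_toLp hk hφ)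
  obtain ⟨D, hD⟩ := (hweak.tendsto_apply_zero hk hφ).norm.bddAbove_range
  refine ⟨D + C, fun k t ht => ?_⟩
  calc ‖φk k t‖ ≤ ‖φk k 0‖ + ‖φk k t - φk k 0‖ := norm_le_norm_add_norm_sub' _ _
    _ ≤ D + C := add_le_add (hD ⟨k, rfl⟩) (((hk k).norm_sub_le_norm_toLp ht).trans (hC k))

theorem tendsto_toLp_comp {F : Type*} [NormedAddCommGroup F] [InnerProductSpace ℝ F]
    {b : EuclideanSpace ℝ (Fin n) → F}
    (hweak : WeakH1Tendsto 1 φk dφk φ dφ) (hk : ∀ k, IsH1Path 1 (φk k) (dφk k))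
    (hφ : IsH1Path 1 φ dφ) (hb : Continuous b) :
    Tendsto (fun k => ((hk k).memLp_comp hb).toLp _) atTop (𝓝 ((hφ.memLp_comp hb).toLp _)) := by
  obtain ⟨M, hM⟩ := hweak.exists_norm_apply_le hk hφ
  have hMφ : ∀ t ∈ Set.Icc (0:ℝ) 1, ‖φ t‖ ≤ M := fun t ht =>
    le_of_tendsto' (hweak.tendsto_apply hk hφ ht).norm fun k => hM k t ht
  obtain ⟨R, hR⟩ :=
    (isCompact_closedBall (0 : EuclideanSpace ℝ (Fin n)) M).exists_bound_of_continuousOn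
      hb.continuousOn
  have hbR : ∀ {x}, ‖x‖ ≤ M → ‖b x‖ ≤ R := fun hx => hR _ (mem_closedBall_zero_iff.2 hx)
  have hmeas {ψ dψ : ℝ → EuclideanSpace ℝ (Fin n)} (h : IsH1Path 1 ψ dψ) :
      AEStronglyMeasurable (fun s => b (ψ s)) μ₀₁ :=
    (h.memLp_comp hb).1
  have hsq : Tendsto (fun k => ∫ s, ‖b (φk k s) - b (φ s)‖ ^ 2 ∂μ₀₁) atTop
      (𝓝 (∫ _, (0:ℝ) ∂μ₀₁)) := by
    refine tendsto_integral_of_dominated_convergence (fun _ => (2 * R) ^ 2)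
      (fun k => ((hmeas (hk k)).sub (hmeas hφ)).norm.pow 2) (integrable_const _)
      (fun k => ?_) ?_
    all_goals filter_upwards [ae_restrict_mem measurableSet_Ioc] with s hs
    · have hs' := Set.Ioc_subset_Icc_self hs
      rw [Real.norm_eq_abs, abs_of_nonneg (sq_nonneg _)]
      gcongr
      exact (norm_sub_le _ _).trans (by linarith [hbR (hM k s hs'), hbR (hMφ s hs')])
    · have hcont : Continuous fun x => ‖b x - b (φ s)‖ ^ 2 :=
        ((hb.sub continuous_const).norm.pow 2)
      simpa [Function.comp_def] using
        (hcont.tendsto _).comp (hweak.tendsto_apply hk hφ (Set.Ioc_subset_Icc_self hs))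
  rw [MeasureTheory.integral_zero] at hsq
  rw [tendsto_iff_norm_sub_tendsto_zero]
  simp only [← MemLp.toLp_sub, MemLp.norm_toLp_eq_sqrt, Pi.sub_apply]
  simpa using hsq.sqrt

end WeakH1Tendsto

/-- the reformulated action `Ŝ` is sequentially weakly lower semicontinuous
on `H¹((0,1);ℝⁿ)`: if `φ̄_k ⇀ φ̄` weakly in `H¹`, then `Ŝ(φ̄) ≤ liminf Ŝ(φ̄_k)`. -/
theorem stmt13 {n : ℕ} (b : EuclideanSpace ℝ (Fin n) → EuclideanSpace ℝ (Fin n))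
    (K : NNReal) (hb : LipschitzWith K b)
    (φk dφk : ℕ → ℝ → EuclideanSpace ℝ (Fin n))
    (φ dφ : ℝ → EuclideanSpace ℝ (Fin n))
    (hk : ∀ k, IsH1Path 1 (φk k) (dφk k))
    (hφ : IsH1Path 1 φ dφ)
    (hweak : WeakH1Tendsto 1 φk dφk φ dφ) :
    Shat b φ dφ ≤ Filter.liminf (fun k => Shat b (φk k) (dφk k)) atTop := by
  simp only [(hk _).shat_eq_norm_mul_norm_sub_inner hb.continuous,
    hφ.shat_eq_norm_mul_norm_sub_inner hb.continuous]
  exact norm_mul_norm_sub_inner_le_liminf (hweak.tendsto_inner_toLp hk hφ)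
    (hweak.tendsto_toLp_comp hk hφ hb.continuous)
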